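/- Let P be a nonsymmetric operad with multiplication π. The map D : P_n → P_{n+1}, D(f) := −ι_π f, is a graded derivation for the cup bracket: D[f,g]_π = [D(f), g]_π + (-1)^m [f, D(g)]_π for f ∈ P_m, g ∈ P_n. Moreover D² = 0, so (P_•, [·,·]_π, D) is a differential graded Lie algebra. -/

import Mathlib

/-!
Inserting `π` into a slot of `f ∪ g = (π ∘₂ g) ∘₁ f` amounts, by operad associativity, to
inserting it into a slot of `f` or of `g`; so `D` is a graded derivation of `∪`, hence of the
graded commutator `[·,·]_π`. In `D² f = Σ (-1)^(i+j) (f ∘_j π) ∘_i π` the terms cancel in pairs: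
`(f ∘_a π) ∘_(b+1) π = (f ∘_b π) ∘_a π` holds for `a < b` by parallel associativity, and for
`a = b` by sequential associativity together with `π ∘₁ π = π ∘₂ π`.
-/

/-- A nonsymmetric operad (in "arity minus one" indexing: `Q n` is the space of
operations of arity `n + 1`, i.e. the space `P_{n+1}` of the paper), given by a
collection of `k`-modules with partial compositions
`∘ᵢ : P_{m+1} × P_{n+1} → P_{m+n+1}` (here `i : Fin (m+1)` is the 0-based
position), satisfying the sequential and parallel associativity axioms and
unit axioms.  The target degree is a free variable `p` constrained by
`m + n = p`, which avoids dependent-type casts in the axioms. -/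
structure NSOperad (k : Type*) [Field k] (Q : ℕ → Type*)
    [∀ n, AddCommGroup (Q n)] [∀ n, Module k (Q n)] where
  comp : ∀ {m n p : ℕ}, m + n = p → Q m → Fin (m + 1) → Q n → Q p
  comp_add_left : ∀ {m n p : ℕ} (h : m + n = p) (f f' : Q m) (i : Fin (m + 1)) (g : Q n),
    comp h (f + f') i g = comp h f i g + comp h f' i g
  comp_add_right : ∀ {m n p : ℕ} (h : m + n = p) (f : Q m) (i : Fin (m + 1)) (g g' : Q n),
    comp h f i (g + g') = comp h f i g + comp h f i g'
  comp_smul_left : ∀ {m n p : ℕ} (h : m + n = p) (a : k) (f : Q m) (i : Fin (m + 1)) (g : Q n),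
    comp h (a • f) i g = a • comp h f i g
  comp_smul_right : ∀ {m n p : ℕ} (h : m + n = p) (a : k) (f : Q m) (i : Fin (m + 1)) (g : Q n),
    comp h f i (a • g) = a • comp h f i g
  one : Q 0
  comp_one : ∀ {m : ℕ} (f : Q m) (i : Fin (m + 1)), comp (Nat.add_zero m) f i one = f
  one_comp : ∀ {m : ℕ} (f : Q m), comp (Nat.zero_add m) one 0 f = f
  assoc_seq : ∀ {m n l q r p : ℕ} (h0 : n + l = q) (h1 : m + q = p) (h2 : m + n = r)
    (h3 : r + l = p) (f : Q m) (g : Q n) (hh : Q l) (i : Fin (m + 1)) (j : Fin (n + 1)),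
    comp h1 f i (comp h0 g j hh) =
      comp h3 (comp h2 f i g) ⟨(i : ℕ) + (j : ℕ), by have := i.isLt; have := j.isLt; omega⟩ hh
  assoc_par : ∀ {m n l r s p : ℕ} (h2 : m + n = r) (h3 : r + l = p) (h4 : m + l = s)
    (h5 : s + n = p) (f : Q m) (g : Q n) (hh : Q l) (i j : Fin (m + 1)), (i : ℕ) < (j : ℕ) →
    comp h3 (comp h2 f i g) ⟨(j : ℕ) + n, by have := j.isLt; omega⟩ hh =
      comp h5 (comp h4 f j hh) ⟨(i : ℕ), by have := i.isLt; omega⟩ g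

namespace NSOperad

variable {k : Type*} [Field k] {Q : ℕ → Type*}
  [∀ n, AddCommGroup (Q n)] [∀ n, Module k (Q n)]

/-- Transport along an equality of degrees. -/
def tr {i j : ℕ} (h : i = j) (x : Q i) : Q j := h ▸ x

variable (O : NSOperad k Q)

/-- The contraction operator `ι_g f := Σᵢ (-1)^{(i-1)(n-1)} f ∘ᵢ g`
(for `f ∈ P_{m+1}`, `g ∈ P_{n+1}` in paper degrees). -/
def iota {m n : ℕ} (g : Q n) (f : Q m) : Q (m + n) :=
  ∑ i : Fin (m + 1), ((-1 : k) ^ ((i : ℕ) * n)) • O.comp rfl f i g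

/-- `π ∈ P_2` is a multiplication if `π ∘₁ π = π ∘₂ π`. -/
def IsMult (π : Q 1) : Prop := O.comp rfl π 0 π = O.comp rfl π 1 π

/-- The Gerstenhaber–Voronov bracket `[f,g]_GV = ι_f g − (-1)^{mn} ι_g f`. -/
def gv {m n : ℕ} (f : Q m) (g : Q n) : Q (m + n) :=
  tr (by omega : n + m = m + n) (O.iota f g) - ((-1 : k) ^ (m * n)) • O.iota g f

/-- The differential `δ_π f := −[π, f]_GV`. -/
def delta (π : Q 1) {n : ℕ} (f : Q n) : Q (n + 1) :=
  - tr (by omega : 1 + n = n + 1) (O.gv π f)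

/-- The map `θ f := −ι_f π`. -/
def theta (π : Q 1) {n : ℕ} (f : Q n) : Q (n + 1) :=
  - tr (by omega : 1 + n = n + 1) (O.iota f π)

/-- The map `D f := −ι_π f`. -/
def Dop (π : Q 1) {n : ℕ} (f : Q n) : Q (n + 1) := - O.iota π f

/-- The cup product `f ∪_π g := (π ∘₂ g) ∘₁ f`. -/
def cup (π : Q 1) {m n : ℕ} (f : Q m) (g : Q n) : Q (m + n + 1) :=
  O.comp (by omega : (1 + n) + m = m + n + 1) (O.comp rfl π 1 g) 0 f

/-- The cup bracket `[f,g]_π := f ∪_π g − (-1)^{(m+1)(n+1)} g ∪_π f`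
(paper degrees `m+1`, `n+1`). -/
def cupBracket (π : Q 1) {m n : ℕ} (f : Q m) (g : Q n) : Q (m + n + 1) :=
  O.cup π f g - ((-1 : k) ^ ((m + 1) * (n + 1))) •
    tr (by omega : n + m + 1 = m + n + 1) (O.cup π g f)

/-- The Frölicher–Nijenhuis bracket
`[f,g]_FN := [f,g]_π + (-1)^{m+1} ι_{δ_π f} g − (-1)^{(m+2)(n+1)} ι_{δ_π g} f`
(paper degrees `m+1`, `n+1`). -/
def fn (π : Q 1) {m n : ℕ} (f : Q m) (g : Q n) : Q (m + n + 1) :=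
  O.cupBracket π f g
    + ((-1 : k) ^ (m + 1)) •
        tr (by omega : n + (m + 1) = m + n + 1) (O.iota (O.delta π f) g)
    - ((-1 : k) ^ ((m + 2) * (n + 1))) •
        tr (by omega : m + (n + 1) = m + n + 1) (O.iota (O.delta π g) f)

/-- The derived bracket
`[f,g]_D := [f,g]_π + ι_{θ f} g − (-1)^{(m+1)(n+1)} ι_{θ g} f`. -/
def derived (π : Q 1) {m n : ℕ} (f : Q m) (g : Q n) : Q (m + n + 1) :=
  O.cupBracket π f g
    + tr (by omega : n + (m + 1) = m + n + 1) (O.iota (O.theta π f) g)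
    - ((-1 : k) ^ ((m + 1) * (n + 1))) •
        tr (by omega : m + (n + 1) = m + n + 1) (O.iota (O.theta π g) f)

/-- The deformed element `π_S := π ∘₁ S + π ∘₂ S − S ∘₁ π` for `S ∈ P_1`. -/
def piDef (π : Q 1) (S : Q 0) : Q 1 :=
  O.comp rfl π 0 S + O.comp rfl π 1 S - O.comp rfl S 0 π

/-- `S ∈ P_1` is a Nijenhuis element for the multiplication `π`:
`(π ∘₂ S) ∘₁ S = S ∘₁ (π ∘₁ S + π ∘₂ S − S ∘₁ π)`. -/
def IsNijenhuisFor (π : Q 1) (S : Q 0) : Prop :=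
  O.comp rfl (O.comp rfl π 1 S) 0 S = O.comp rfl S 0 (O.piDef π S)

/-- Powers `N^j := N ∘₁ N^{j-1}`, `N^0 = 𝟙`. -/
def Npow (N : Q 0) : ℕ → Q 0
  | 0 => O.one
  | (j + 1) => O.comp (rfl : (0 : ℕ) + 0 = 0) N 0 (Npow N j)

/-- `R ∈ P_1` is a Rota–Baxter element of weight `lam`:
`(π ∘₂ R) ∘₁ R = R ∘₁ (π ∘₁ R + π ∘₂ R + lam π)`. -/
def IsRB (π : Q 1) (lam : k) (R : Q 0) : Prop :=
  O.comp rfl (O.comp rfl π 1 R) 0 R =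
    O.comp rfl R 0 (O.comp rfl π 0 R + O.comp rfl π 1 R + lam • π)

/-- `r ∈ P_1` is an averaging element:
`(π ∘₂ r) ∘₁ r = r ∘₁ (π ∘₁ r) = r ∘₁ (π ∘₂ r)`. -/
def IsAvg (π : Q 1) (r : Q 0) : Prop :=
  O.comp rfl (O.comp rfl π 1 r) 0 r = O.comp rfl r 0 (O.comp rfl π 0 r) ∧
  O.comp rfl (O.comp rfl π 1 r) 0 r = O.comp rfl r 0 (O.comp rfl π 1 r)

end NSOperad

theorem Fin.sum_sum_neg_one_pow_smul_eq_zero {R M : Type*} [Ring R] [AddCommGroup M]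
    [Module R M] {n : ℕ} (c : Fin (n + 1) → Fin (n + 2) → M)
    (hc : ∀ a b : Fin (n + 1), a ≤ b → c a b.succ = c b a.castSucc) :
    ∑ j : Fin (n + 1), ∑ i : Fin (n + 2), (-1 : R) ^ ((i : ℕ) + (j : ℕ)) • c j i = 0 := by
  rw [← Finset.sum_product', Finset.univ_product_univ]
  let S : Finset (Fin (n + 1) × Fin (n + 2)) := {p | (p.2 : ℕ) ≤ p.1}
  have mem_S {p} : p ∈ S ↔ (p.2 : ℕ) ≤ p.1 := by simp [S]
  rw [← Finset.sum_add_sum_compl S, ← eq_neg_iff_add_eq_zero, ← Finset.sum_neg_distrib]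
  -- pair the term `(j, i)`, `i ≤ j`, with the term `(i, j + 1)` of opposite sign
  refine Finset.sum_bij (fun p hp => (p.2.castLT ((mem_S.1 hp).trans_lt p.1.2), p.1.succ))
    ?_ ?_ ?_ ?_
  · intro p hp
    simp only [mem_S, Finset.mem_compl, Fin.val_succ, Fin.val_castLT, not_le] at hp ⊢
    omega
  · rintro ⟨j, i⟩ hp ⟨j', i'⟩ hp' h
    simp only [Prod.ext_iff, Fin.ext_iff, Fin.val_castLT, Fin.val_succ] at h ⊢
    omega
  · rintro ⟨j, i⟩ hp
    simp only [Finset.mem_compl, mem_S, not_le] at hp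
    refine ⟨(i.pred (by rintro rfl; simp at hp), j.castSucc), ?_, ?_⟩
    · simp only [mem_S, Fin.val_castSucc, Fin.val_pred]; omega
    · ext <;> simp
  · rintro ⟨j, i⟩ hp
    have := hc (i.castLT ((mem_S.1 hp).trans_lt j.2)) j (mem_S.1 hp)
    simp only [Fin.castSucc_castLT] at this
    simp only [this, Fin.val_succ, Fin.val_castLT]
    rw [show (j : ℕ) + 1 + i = i + j + 1 by ring, pow_succ, mul_neg_one, neg_smul, neg_neg]

namespace NSOperad

theorem tr_tr {Q : ℕ → Type*} {i j l : ℕ} (e : i = j) (e' : j = l) (x : Q i) :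
    tr e' (tr e x) = tr (e.trans e') x := by
  subst e e'; rfl

variable {k : Type*} [Field k] {Q : ℕ → Type*} [∀ n, AddCommGroup (Q n)] [∀ n, Module k (Q n)]

section Transport

variable {i j : ℕ} (e : i = j)

theorem tr_add (x y : Q i) : tr e (x + y) = tr e x + tr e y := by subst e; rfl

theorem tr_sub (x y : Q i) : tr e (x - y) = tr e x - tr e y := by subst e; rfl

theorem tr_neg (x : Q i) : tr e (-x) = -tr e x := by subst e; rfl

theorem tr_smul (a : k) (x : Q i) : tr e (a • x) = a • tr e x := by subst e; rfl

theorem tr_sum {α : Type*} (s : Finset α) (x : α → Q i) :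
    tr e (∑ a ∈ s, x a) = ∑ a ∈ s, tr e (x a) := by subst e; rfl

end Transport

variable (O : NSOperad k Q)

section Linearity

variable {m n p : ℕ} (h : m + n = p)

def compLeft (i : Fin (m + 1)) (g : Q n) : Q m →ₗ[k] Q p where
  toFun f := O.comp h f i g
  map_add' f f' := O.comp_add_left h f f' i g
  map_smul' a f := O.comp_smul_left h a f i g

def compRight (f : Q m) (i : Fin (m + 1)) : Q n →ₗ[k] Q p where
  toFun g := O.comp h f i g
  map_add' g g' := O.comp_add_right h f i g g'
  map_smul' a g := O.comp_smul_right h a f i g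

theorem comp_neg_left (f : Q m) (i : Fin (m + 1)) (g : Q n) :
    O.comp h (-f) i g = -O.comp h f i g :=
  map_neg (O.compLeft h i g) f

theorem comp_sub_left (f f' : Q m) (i : Fin (m + 1)) (g : Q n) :
    O.comp h (f - f') i g = O.comp h f i g - O.comp h f' i g :=
  map_sub (O.compLeft h i g) f f'

theorem comp_sum_left {α : Type*} (s : Finset α) (f : α → Q m) (i : Fin (m + 1)) (g : Q n) :
    O.comp h (∑ a ∈ s, f a) i g = ∑ a ∈ s, O.comp h (f a) i g :=
  map_sum (O.compLeft h i g) f s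

theorem comp_neg_right (f : Q m) (i : Fin (m + 1)) (g : Q n) :
    O.comp h f i (-g) = -O.comp h f i g :=
  map_neg (O.compRight h f i) g

theorem comp_sum_right {α : Type*} (f : Q m) (i : Fin (m + 1)) (s : Finset α) (g : α → Q n) :
    O.comp h f i (∑ a ∈ s, g a) = ∑ a ∈ s, O.comp h f i (g a) :=
  map_sum (O.compRight h f i) g s

theorem tr_comp {p' : ℕ} (e : p = p') (f : Q m) (i : Fin (m + 1)) (g : Q n) :
    tr e (O.comp h f i g) = O.comp (h.trans e) f i g := by
  subst e; rfl

end Linearity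

section Cup

variable (π : Q 1) {m n : ℕ}

theorem cup_neg_left (f : Q m) (g : Q n) : O.cup π (-f) g = -O.cup π f g :=
  O.comp_neg_right _ _ _ f

theorem cup_smul_left (a : k) (f : Q m) (g : Q n) : O.cup π (a • f) g = a • O.cup π f g :=
  O.comp_smul_right _ a _ _ f

theorem cup_sum_left {α : Type*} (s : Finset α) (f : α → Q m) (g : Q n) :
    O.cup π (∑ a ∈ s, f a) g = ∑ a ∈ s, O.cup π (f a) g :=
  O.comp_sum_right _ _ _ s f

theorem cup_neg_right (f : Q m) (g : Q n) : O.cup π f (-g) = -O.cup π f g := by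
  rw [cup, comp_neg_right, comp_neg_left]; rfl

theorem cup_smul_right (a : k) (f : Q m) (g : Q n) : O.cup π f (a • g) = a • O.cup π f g := by
  rw [cup, comp_smul_right, comp_smul_left]; rfl

theorem cup_sum_right {α : Type*} (s : Finset α) (f : Q m) (g : α → Q n) :
    O.cup π f (∑ a ∈ s, g a) = ∑ a ∈ s, O.cup π f (g a) := by
  rw [cup, comp_sum_right, comp_sum_left]; rfl

theorem tr_cup_comp_left {l : ℕ} (f : Q m) (g : Q n) (x : Q l) (i : Fin (m + 1)) :
    tr (by ring : m + l + n + 1 = m + n + 1 + l) (O.cup π (O.comp rfl f i x) g) =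
      O.comp rfl (O.cup π f g) ⟨i, by omega⟩ x := by
  simp only [cup]
  rw [tr_comp, O.assoc_seq rfl _ (by omega) rfl _ f x 0 i]
  simp

theorem tr_cup_comp_right {l : ℕ} (f : Q m) (g : Q n) (x : Q l) (j : Fin (n + 1)) :
    tr (by ring : m + (n + l) + 1 = m + n + 1 + l) (O.cup π f (O.comp rfl g j x)) =
      O.comp rfl (O.cup π f g) ⟨m + 1 + j, by omega⟩ x := by
  simp only [cup]
  rw [tr_comp, O.assoc_seq rfl rfl rfl (by omega) π g x 1 j]
  refine (O.assoc_par (by omega) rfl (by omega) (by omega) _ f x 0 ⟨1 + j, by omega⟩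
    (by simp)).symm.trans ?_
  congr 1
  ext
  simp only
  omega

end Cup

section Differential

variable (π : Q 1) {m n : ℕ}

theorem Dop_sub (x y : Q n) : O.Dop π (x - y) = O.Dop π x - O.Dop π y := by
  simp only [Dop, iota, comp_sub_left, smul_sub, Finset.sum_sub_distrib, neg_sub]
  abel

theorem Dop_smul (a : k) (x : Q n) : O.Dop π (a • x) = a • O.Dop π x := by
  simp only [Dop, iota, comp_smul_left, smul_comm _ a, ← Finset.smul_sum, smul_neg]

theorem Dop_tr {n' : ℕ} (e : n = n') (x : Q n) :
    O.Dop π (tr e x) = tr (congrArg (· + 1) e) (O.Dop π x) := by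
  subst e; rfl

theorem Dop_cup (f : Q m) (g : Q n) :
    O.Dop π (O.cup π f g) =
      tr (by ring : m + 1 + n + 1 = m + n + 1 + 1) (O.cup π (O.Dop π f) g) +
        ((-1 : k) ^ (m + 1)) •
          tr (by ring : m + (n + 1) + 1 = m + n + 1 + 1) (O.cup π f (O.Dop π g)) := by
  have hf : tr (by ring : m + 1 + n + 1 = m + n + 1 + 1) (O.cup π (O.Dop π f) g) =
      -∑ i : Fin (m + 1), (-1 : k) ^ (i : ℕ) • O.comp rfl (O.cup π f g) ⟨i, by omega⟩ π := by
    simp only [Dop, iota, mul_one, cup_neg_left, cup_sum_left, cup_smul_left, tr_neg, tr_sum,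
      tr_smul, tr_cup_comp_left]
  have hg : tr (by ring : m + (n + 1) + 1 = m + n + 1 + 1) (O.cup π f (O.Dop π g)) =
      -∑ j : Fin (n + 1), (-1 : k) ^ (j : ℕ) •
        O.comp rfl (O.cup π f g) ⟨m + 1 + j, by omega⟩ π := by
    simp only [Dop, iota, mul_one, cup_neg_right, cup_sum_right, cup_smul_right, tr_neg, tr_sum,
      tr_smul, tr_cup_comp_right]
  have split : ∀ F : Fin (m + n + 1 + 1) → Q (m + n + 1 + 1), ∑ i, F i =
      ∑ i : Fin (m + 1), F ⟨i, by omega⟩ + ∑ j : Fin (n + 1), F ⟨m + 1 + j, by omega⟩ := by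
    intro F
    rw [← Fin.sum_congr' F (by ring : m + 1 + (n + 1) = m + n + 1 + 1), Fin.sum_univ_add]
    rfl
  rw [hf, hg, Dop, iota, split]
  simp only [mul_one, pow_add, mul_smul, Finset.smul_sum, smul_neg, neg_add]

theorem Dop_cupBracket (f : Q m) (g : Q n) :
    O.Dop π (O.cupBracket π f g) =
      tr (by ring : m + 1 + n + 1 = m + n + 1 + 1) (O.cupBracket π (O.Dop π f) g) +
        ((-1 : k) ^ (m + 1)) •
          tr (by ring : m + (n + 1) + 1 = m + n + 1 + 1) (O.cupBracket π f (O.Dop π g)) := by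
  simp only [cupBracket, Dop_sub, Dop_smul, Dop_tr, Dop_cup, tr_add, tr_sub, tr_smul, tr_tr,
    smul_add, smul_sub, smul_smul, ← pow_add]
  rw [show (m + 1 + 1) * (n + 1) = (m + 1) * (n + 1) + (n + 1) by ring,
    show m + 1 + (m + 1) * (n + 1 + 1) = (m + 1) * (n + 1) + 2 * (m + 1) by ring,
    pow_add _ _ (2 * _), (even_two_mul _).neg_one_pow, mul_one]
  abel

end Differential

section Square

variable {π : Q 1} {n : ℕ}

theorem comp_comp_succ_of_le (hπ : O.IsMult π) (f : Q n) {a b : Fin (n + 1)} (hab : a ≤ b) :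
    O.comp rfl (O.comp rfl f a π) b.succ π = O.comp rfl (O.comp rfl f b π) a.castSucc π := by
  rcases hab.lt_or_eq with hlt | rfl
  · exact O.assoc_par rfl rfl rfl rfl f π π a b hlt
  · calc O.comp rfl (O.comp rfl f a π) a.succ π = O.comp rfl f a (O.comp rfl π 1 π) :=
          (O.assoc_seq rfl rfl rfl rfl f π π a 1).symm
      _ = O.comp rfl f a (O.comp rfl π 0 π) := by rw [hπ]
      _ = O.comp rfl (O.comp rfl f a π) a.castSucc π := O.assoc_seq rfl rfl rfl rfl f π π a 0

theorem Dop_Dop (hπ : O.IsMult π) (f : Q n) : O.Dop π (O.Dop π f) = 0 := by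
  simp only [Dop, iota, mul_one, comp_neg_left, comp_sum_left, comp_smul_left, smul_neg,
    Finset.smul_sum, smul_smul, ← pow_add, Finset.sum_neg_distrib, neg_neg]
  rw [Finset.sum_comm]
  exact Fin.sum_sum_neg_one_pow_smul_eq_zero _ fun a b => O.comp_comp_succ_of_le hπ f

end Square

end NSOperad

open NSOperad

theorem Dop_derivation_of_cup_bracket {k : Type*} [Field k] {Q : ℕ → Type*}
    [∀ n, AddCommGroup (Q n)] [∀ n, Module k (Q n)] (O : NSOperad k Q)
    (π : Q 1) (hπ : O.IsMult π) {m n : ℕ} (f : Q m) (g : Q n) :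
    (O.Dop π (O.cupBracket π f g) =
      tr (by omega : m + 1 + n + 1 = m + n + 1 + 1) (O.cupBracket π (O.Dop π f) g) +
        ((-1 : k) ^ (m + 1)) •
          tr (by omega : m + (n + 1) + 1 = m + n + 1 + 1) (O.cupBracket π f (O.Dop π g))) ∧
    O.Dop π (O.Dop π f) = 0 := by
  exact ⟨O.Dop_cupBracket π f g, O.Dop_Dop hπ f⟩
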